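/- The map w ↦ (2iw₂, −w₁ − w₂²) is a bijection from 𝕃₂ onto the symmetrized bidisc 𝔾₂ = {(λ₁+λ₂, λ₁λ₂) : λ₁, λ₂ ∈ 𝔻}. -/

import Mathlib

/-
In the coordinates `λ₁ = i z₂ + z₁`, `λ₂ = i z₂ - z₁` one has `λ₁ + λ₂ = 2 i z₂` and
`λ₁ λ₂ = -(z₁² + z₂²)`, while the parallelogram law gives `|λ₁|² + |λ₂|² = 2‖z‖²`. Hence the two
inequalities defining `L₂` read `A + B < 2` and `A + B < 1 + A B` for `A = |λ₁|²`, `B = |λ₂|²`,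
i.e. `(1 - A)(1 - B) > 0` with `A + B < 2`, which says exactly that `(λ₁, λ₂) ∈ 𝔻²`.
The map `w ↦ (2 i w₂, -w₁ - w₂²)` sends `Λ₂(z)` to `(λ₁ + λ₂, λ₁ λ₂)`, so it maps `𝕃₂` onto `𝔾₂`,
and it is injective on all of `ℂ²`.
-/

open Complex

/-- The Lie ball `L₂ ⊂ ℂ²` (as pairs). -/
def L2 : Set (ℂ × ℂ) :=
  {z | Real.sqrt (‖z.1‖ ^ 2 + ‖z.2‖ ^ 2) < 1 ∧
    2 * (‖z.1‖ ^ 2 + ‖z.2‖ ^ 2) <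
      1 + ‖z.1 ^ 2 + z.2 ^ 2‖ ^ 2}

/-- `𝕃₂ = Λ₂(L₂)` where `Λ₂(z₁,z₂) = (z₁², z₂)`. -/
def bbL2 : Set (ℂ × ℂ) := (fun z : ℂ × ℂ => (z.1 ^ 2, z.2)) '' L2

/-- The symmetrized bidisc `𝔾₂`. -/
def G2 : Set (ℂ × ℂ) :=
  {w | ∃ l₁ l₂ : ℂ, ‖l₁‖ < 1 ∧ ‖l₂‖ < 1 ∧
    w = (l₁ + l₂, l₁ * l₂)}

open Metric

lemma add_lt_two_and_add_lt_one_add_mul_iff {a b : ℝ} :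
    (a + b < 2 ∧ a + b < 1 + a * b) ↔ (a < 1 ∧ b < 1) := by
  constructor
  · rintro ⟨hsum, hprod⟩
    constructor <;> by_contra! h <;> nlinarith
  · rintro ⟨ha, hb⟩
    exact ⟨by linarith, by nlinarith [mul_pos (sub_pos.2 ha) (sub_pos.2 hb)]⟩

def symmetrize (l : ℂ × ℂ) : ℂ × ℂ := (l.1 + l.2, l.1 * l.2)

lemma G2_eq_image_symmetrize : G2 = symmetrize '' (ball 0 1 ×ˢ ball 0 1) := by
  ext w
  simp only [G2, symmetrize, Set.mem_image, Set.mem_prod, mem_ball_zero_iff, Prod.exists]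
  grind

namespace LieBall

def toBidisc (z : ℂ × ℂ) : ℂ × ℂ := (I * z.2 + z.1, I * z.2 - z.1)

lemma toBidisc_surjective : Function.Surjective toBidisc := by
  intro l
  refine ⟨((l.1 - l.2) / 2, -I * (l.1 + l.2) / 2), ?_⟩
  ext <;> simp only [toBidisc] <;> linear_combination (-(l.1 + l.2) / 2) * I_sq

lemma sq_norm_add_sq_norm_toBidisc (z : ℂ × ℂ) :
    ‖(toBidisc z).1‖ ^ 2 + ‖(toBidisc z).2‖ ^ 2 = 2 * (‖z.1‖ ^ 2 + ‖z.2‖ ^ 2) := by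
  rw [toBidisc, parallelogram_law_with_norm ℝ, norm_mul, norm_I, one_mul, add_comm (‖z.2‖ ^ 2)]

lemma symmetrize_toBidisc (z : ℂ × ℂ) :
    symmetrize (toBidisc z) = (2 * I * z.2, -z.1 ^ 2 - z.2 ^ 2) := by
  ext <;> simp only [symmetrize, toBidisc]
  · ring
  · linear_combination z.2 ^ 2 * I_sq

lemma mem_L2_iff (z : ℂ × ℂ) : z ∈ L2 ↔ toBidisc z ∈ ball 0 1 ×ˢ ball 0 1 := by
  have hprod : ‖(toBidisc z).1‖ ^ 2 * ‖(toBidisc z).2‖ ^ 2 = ‖z.1 ^ 2 + z.2 ^ 2‖ ^ 2 := by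
    rw [← mul_pow, ← norm_mul, ← norm_neg (z.1 ^ 2 + z.2 ^ 2)]
    congr 2
    simp only [toBidisc]
    linear_combination z.2 ^ 2 * I_sq
  rw [L2, Set.mem_ofPred_eq, Real.sqrt_lt' one_pos, Set.mem_prod, mem_ball_zero_iff,
    mem_ball_zero_iff, ← sq_lt_one_iff₀ (norm_nonneg _), ← sq_lt_one_iff₀ (norm_nonneg _),
    ← add_lt_two_and_add_lt_one_add_mul_iff, sq_norm_add_sq_norm_toBidisc, hprod]
  constructor <;> rintro ⟨h₁, h₂⟩ <;> constructor <;> linarith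

lemma image_toBidisc_L2 : toBidisc '' L2 = ball 0 1 ×ˢ ball 0 1 := by
  rw [show L2 = toBidisc ⁻¹' (ball 0 1 ×ˢ ball 0 1) from Set.ext mem_L2_iff,
    Set.image_preimage_eq _ toBidisc_surjective]

end LieBall

open LieBall

lemma injective_two_I_mul_snd_neg_fst_sub_sq :
    Function.Injective (fun w : ℂ × ℂ => (2 * I * w.2, -w.1 - w.2 ^ 2)) := by
  intro w w' h
  simp only [Prod.mk.injEq] at h
  obtain ⟨h₁, h₂⟩ := h
  have hsnd : w.2 = w'.2 := mul_left_cancel₀ (mul_ne_zero two_ne_zero I_ne_zero) h₁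
  exact Prod.ext (by linear_combination -h₂ - (w.2 + w'.2) * hsnd) hsnd

/-- The map `w ↦ (2iw₂, −w₁ − w₂²)` is a bijection from `𝕃₂` onto `𝔾₂`. -/
theorem stmt_9 :
    Set.BijOn (fun w : ℂ × ℂ => (2 * I * w.2, -w.1 - w.2 ^ 2)) bbL2 G2 := by
  have himage : (fun w : ℂ × ℂ => (2 * I * w.2, -w.1 - w.2 ^ 2)) '' bbL2 = G2 := by
    rw [bbL2, Set.image_image, G2_eq_image_symmetrize, ← image_toBidisc_L2, Set.image_image]
    congr 1
    funext z
    rw [symmetrize_toBidisc]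
  exact himage ▸ injective_two_I_mul_snd_neg_fst_sub_sq.injOn.bijOn_image
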